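/- Let M be a compact topological space, f = (f₁, f₂) : M → ℝ² continuous, and p₁ ∈ RG_{f₁}. Then the canonical injection φ : RG_{f̃₂} → RS_f is a topological embedding (a homeomorphism onto its image ω₁⁻¹(p₁)). -/

import Mathlib

open Set Topology

variable {M : Type*} [TopologicalSpace M]

/-- The fiber-component equivalence relation of a map `g`: `x ~ y` iff `y` lies in the
connected component of `x` within the fiber `g ⁻¹' {g x}`. -/
def reebSetoid {T : Type*} (g : M → T) : Setoid M where
  r x y := y ∈ connectedComponentIn (g ⁻¹' {g x}) x
  iseqv := by
    constructor
    · intro x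
      exact mem_connectedComponentIn rfl
    · intro x y h
      have hy : y ∈ g ⁻¹' {g x} := connectedComponentIn_subset (g ⁻¹' {g x}) x h
      have hgy : g y = g x := hy
      have hx : x ∈ connectedComponentIn (g ⁻¹' {g x}) y := by
        rw [← connectedComponentIn_eq h]
        exact mem_connectedComponentIn rfl
      show x ∈ connectedComponentIn (g ⁻¹' {g y}) y
      rwa [hgy]
    · intro x y z hxy hyz
      have hy : y ∈ g ⁻¹' {g x} := connectedComponentIn_subset (g ⁻¹' {g x}) x hxy
      have hgy : g y = g x := hy
      show z ∈ connectedComponentIn (g ⁻¹' {g x}) x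
      rw [connectedComponentIn_eq hxy]
      have : z ∈ connectedComponentIn (g ⁻¹' {g y}) y := hyz
      rwa [hgy] at this

/-- The Reeb quotient (Reeb space / Reeb graph) of a map `g`. -/
def ReebQuot {T : Type*} (g : M → T) : Type _ := Quotient (reebSetoid g)

instance {T : Type*} (g : M → T) : TopologicalSpace (ReebQuot g) :=
  instTopologicalSpaceQuotient

/-- The quotient map onto the Reeb quotient. -/
def reebMk {T : Type*} (g : M → T) : M → ReebQuot g := Quotient.mk (reebSetoid g)

/-- Fiber components of a finer map are contained in fiber components of a coarser map. -/
theorem reeb_descend {T S : Type*} {g : M → T} {g' : M → S}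
    (hg : ∀ a b, g a = g b → g' a = g' b) {x y : M}
    (h : (reebSetoid g).r x y) : (reebSetoid g').r x y := by
  have hsub : g ⁻¹' {g x} ⊆ g' ⁻¹' {g' x} := by
    intro z hz
    simp only [mem_preimage, mem_singleton_iff] at hz ⊢
    exact hg z x hz
  exact connectedComponentIn_mono x hsub h

/-- The map `ω₁ : RS_f → RG_{f₁}` induced on Reeb quotients. -/
def omega1 (f₁ f₂ : M → ℝ) : ReebQuot (fun m => (f₁ m, f₂ m)) → ReebQuot f₁ :=
  Quotient.lift (reebMk f₁)
    (fun _ _ hab => Quot.sound (reeb_descend (fun _ _ huv => congrArg Prod.fst huv) hab))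

/-- The map `ω₂ : RS_f → RG_{f₂}` induced on Reeb quotients. -/
def omega2 (f₁ f₂ : M → ℝ) : ReebQuot (fun m => (f₁ m, f₂ m)) → ReebQuot f₂ :=
  Quotient.lift (reebMk f₂)
    (fun _ _ hab => Quot.sound (reeb_descend (fun _ _ huv => congrArg Prod.snd huv) hab))

/-- The induced map `f̄ : ReebQuot g → T` with `f̄ ∘ q_g = g`. -/
def reebLift {T : Type*} (g : M → T) : ReebQuot g → T :=
  Quotient.lift g (fun a b hab => by
    have : b ∈ g ⁻¹' {g a} := connectedComponentIn_subset (g ⁻¹' {g a}) a hab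
    exact (show g b = g a from this).symm)


/-!
Let `C = q_{f₁}⁻¹(p₁)`. Since `f₁` is constant on `C`, fiber components of `f₂|_C` are the
fiber components of `f` through points of `C`, and `C` is a union of such components. So `φ` is
the map of quotients induced by the inclusion of the closed saturated subset `C`, and such a map
is a closed embedding: the preimage of `φ(F)` in `M` is the image of the preimage of `F` in `C`,
closed in `M` because `C` is.
-/


section Topology

variable {X : Type*} [TopologicalSpace X]

theorem IsClosed.connectedComponentIn {s : Set X} (hs : IsClosed s) (x : X) :
    IsClosed (connectedComponentIn s x) := by
  by_cases hx : x ∈ s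
  · rw [connectedComponentIn_eq_image hx]
    exact hs.isClosedEmbedding_subtypeVal.isClosedMap _ isClosed_connectedComponent
  · rw [connectedComponentIn_eq_empty hx]
    exact isClosed_empty

theorem image_val_connectedComponentIn_preimage_val {C F : Set X} {x : C}
    (hC : connectedComponentIn F x ⊆ C) :
    ((↑) : C → X) '' connectedComponentIn ((↑) ⁻¹' F) x = connectedComponentIn F x := by
  by_cases hx : (x : X) ∈ F
  · have hK : ((↑) : C → X) '' ((↑) ⁻¹' connectedComponentIn F x) = connectedComponentIn F x :=
      image_preimage_eq_of_subset (by rwa [Subtype.range_val])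
    apply Subset.antisymm
    · exact (isPreconnected_connectedComponentIn.image _ continuous_subtype_val.continuousOn)
        |>.subset_connectedComponentIn ⟨x, mem_connectedComponentIn hx, rfl⟩
          (image_subset_iff.2 (connectedComponentIn_subset _ _))
    · have hKconn : IsPreconnected (((↑) : C → X) ⁻¹' connectedComponentIn F x) := by
        rw [← IsInducing.subtypeVal.isPreconnected_image, hK]
        exact isPreconnected_connectedComponentIn
      rw [← hK]
      exact image_mono (hKconn.subset_connectedComponentIn (mem_connectedComponentIn hx)
        (preimage_mono (connectedComponentIn_subset F x)))
  · have hx' : x ∉ ((↑) ⁻¹' F : Set C) := hx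
    rw [connectedComponentIn_eq_empty hx, connectedComponentIn_eq_empty hx', image_empty]

theorem isClosedEmbedding_of_isClosed_of_saturated {r : Setoid X} {C : Set X} {s : Setoid C}
    (hC : IsClosed C) (hsat : ∀ c ∈ C, ∀ y, r c y → y ∈ C) (hrs : ∀ c c' : C, s c c' ↔ r c c')
    {φ : Quotient s → Quotient r} (hφ : ∀ c, φ (Quotient.mk s c) = Quotient.mk r c) :
    IsClosedEmbedding φ ∧ range φ = Quotient.mk r '' C := by
  have hcont : Continuous φ := by
    have hcomp : φ ∘ Quotient.mk s = Quotient.mk r ∘ (↑) := funext hφ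
    exact (isQuotientMap_quotient_mk' (s := s)).continuous_iff.2
      (hcomp ▸ continuous_quotient_mk'.comp continuous_subtype_val)
  have hinj : Function.Injective φ := by
    intro a b h
    obtain ⟨a, rfl⟩ := Quotient.mk_surjective a
    obtain ⟨b, rfl⟩ := Quotient.mk_surjective b
    rw [hφ, hφ] at h
    exact Quotient.sound ((hrs a b).2 (Quotient.exact h))
  have hclosed : IsClosedMap φ := by
    intro F hF
    have hpre : Quotient.mk r ⁻¹' (φ '' F) = (↑) '' (Quotient.mk s ⁻¹' F) := by
      ext m
      constructor
      · rintro ⟨c, hcF, hcm⟩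
        obtain ⟨c, rfl⟩ := Quotient.mk_surjective c
        rw [hφ] at hcm
        have hcm := Quotient.exact hcm
        refine ⟨⟨m, hsat c c.2 m hcm⟩, ?_, rfl⟩
        rwa [mem_preimage, ← Quotient.sound ((hrs _ _).2 hcm)]
      · rintro ⟨c, hcF, rfl⟩
        exact ⟨_, hcF, hφ c⟩
    rw [← (isQuotientMap_quotient_mk' (s := r)).isClosed_preimage]
    change IsClosed (Quotient.mk r ⁻¹' _)
    rw [hpre]
    exact hC.isClosedEmbedding_subtypeVal.isClosedMap _ (hF.preimage continuous_quotient_mk')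
  refine ⟨.of_continuous_injective_isClosedMap hcont hinj hclosed, ?_⟩
  rw [← Quotient.mk_surjective.range_comp, image_eq_range]
  exact congrArg range (funext hφ)

end Topology

section Reeb

variable {T S : Type*}

theorem reebMk_eq_reebMk_iff {g : M → T} {x y : M} :
    reebMk g x = reebMk g y ↔ y ∈ connectedComponentIn (g ⁻¹' {g x}) x :=
  Quotient.eq

theorem apply_eq_of_reebMk_eq {g : M → T} {x y : M} (h : reebMk g x = reebMk g y) :
    g x = g y :=
  congrArg (reebLift g) h

theorem reebSetoid_iff_of_fiber_iff {g : M → T} {g' : M → S}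
    (h : ∀ a b, g a = g b ↔ g' a = g' b) {x y : M} :
    (reebSetoid g).r x y ↔ (reebSetoid g').r x y :=
  ⟨reeb_descend fun a b => (h a b).1, reeb_descend fun a b => (h a b).2⟩

theorem reebSetoid_restrict_iff {h : M → T} {C : Set M}
    (hC : ∀ c ∈ C, ∀ y, (reebSetoid h).r c y → y ∈ C) (c c' : C) :
    (reebSetoid fun x : C => h x).r c c' ↔ (reebSetoid h).r c c' := by
  change c' ∈ connectedComponentIn ((↑) ⁻¹' (h ⁻¹' {h c})) c ↔ _
  rw [← Subtype.val_injective.mem_set_image,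
    image_val_connectedComponentIn_preimage_val (hC c c.2)]
  rfl

theorem isClosed_reebMk_preimage_singleton [TopologicalSpace T] [T1Space T] {g : M → T}
    (hg : Continuous g) (p : ReebQuot g) : IsClosed (reebMk g ⁻¹' {p}) := by
  obtain ⟨x, rfl⟩ : ∃ x, reebMk g x = p := Quotient.mk_surjective p
  have hfiber : reebMk g ⁻¹' {reebMk g x} = connectedComponentIn (g ⁻¹' {g x}) x := by
    ext y
    exact eq_comm.trans reebMk_eq_reebMk_iff
  rw [hfiber]
  exact (isClosed_singleton.preimage hg).connectedComponentIn x

theorem preimage_omega1 (f₁ f₂ : M → ℝ) (s : Set (ReebQuot f₁)) :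
    omega1 f₁ f₂ ⁻¹' s = reebMk (fun m => (f₁ m, f₂ m)) '' (reebMk f₁ ⁻¹' s) :=
  (Quotient.mk_surjective.image_preimage _).symm

end Reeb

theorem phi_embedding_general {M : Type*} [TopologicalSpace M] (f₁ f₂ : M → ℝ)
    (hf₁ : Continuous f₁) (p₁ : ReebQuot f₁) :
    ∃ φ : ReebQuot (fun c : (reebMk f₁ ⁻¹' {p₁} : Set M) => f₂ c.1) → ReebQuot (fun m => (f₁ m, f₂ m)),
      (∀ c : (reebMk f₁ ⁻¹' {p₁} : Set M), φ (reebMk (fun c : (reebMk f₁ ⁻¹' {p₁} : Set M) => f₂ c.1) c) = reebMk (fun m => (f₁ m, f₂ m)) c.1) ∧ Topology.IsEmbedding φ ∧ Set.range φ = omega1 f₁ f₂ ⁻¹' {p₁} := by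
  set C := reebMk f₁ ⁻¹' {p₁}
  have hsat : ∀ c ∈ C, ∀ y, (reebSetoid fun m => (f₁ m, f₂ m)).r c y → y ∈ C :=
    fun c hc y hy =>
      (Quotient.sound (reeb_descend (fun _ _ h => congrArg Prod.fst h) hy)).symm.trans hc
  have hrel : ∀ c c' : C, (reebSetoid fun c : C => f₂ c).r c c' ↔
      (reebSetoid fun m => (f₁ m, f₂ m)).r c c' := by
    refine fun c c' =>
      (reebSetoid_iff_of_fiber_iff fun a b => ?_).trans (reebSetoid_restrict_iff hsat c c')
    have hf₁ab : f₁ a = f₁ b := apply_eq_of_reebMk_eq (a.2.trans b.2.symm)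
    simp [hf₁ab]
  let φ : ReebQuot (fun c : C => f₂ c) → ReebQuot (fun m => (f₁ m, f₂ m)) :=
    Quotient.lift (fun c : C => reebMk _ c.1) fun a b h => Quotient.sound ((hrel a b).1 h)
  obtain ⟨hemb, hrange⟩ := isClosedEmbedding_of_isClosed_of_saturated (φ := φ)
    (isClosed_reebMk_preimage_singleton hf₁ p₁) hsat hrel fun _ => rfl
  exact ⟨φ, fun _ => rfl, hemb.isEmbedding, hrange.trans (preimage_omega1 f₁ f₂ _).symm⟩

/-- for compact `M`, the canonical injection `φ : RG_{f̃₂} → RS_f` is a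
topological embedding, a homeomorphism onto its image `ω₁⁻¹(p₁)`. -/
theorem phi_embedding {M : Type*} [TopologicalSpace M] [CompactSpace M] (f₁ f₂ : M → ℝ)
    (hf₁ : Continuous f₁) (hf₂ : Continuous f₂) (p₁ : ReebQuot f₁) :
    ∃ φ : ReebQuot (fun c : (reebMk f₁ ⁻¹' {p₁} : Set M) => f₂ c.1) → ReebQuot (fun m => (f₁ m, f₂ m)),
      (∀ c : (reebMk f₁ ⁻¹' {p₁} : Set M), φ (reebMk (fun c : (reebMk f₁ ⁻¹' {p₁} : Set M) => f₂ c.1) c) = reebMk (fun m => (f₁ m, f₂ m)) c.1) ∧ Topology.IsEmbedding φ ∧ Set.range φ = omega1 f₁ f₂ ⁻¹' {p₁} :=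
  phi_embedding_general f₁ f₂ hf₁ p₁
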